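/- arXiv:1710.03115 — 2 statements merged into one kernel-verified Lean document; each statement's English description precedes it below -/
import Mathlib

section
/- Let P be a partially ordered set and let M be a collection of subsets of P containing all singleton sets. If P is M-continuous, then for every subset Y ⊆ P, int_{σ_M}(↑Y) ⊆ ↟_M Y, where ↑Y is the upper closure of Y. -/
/-! If `x` lies in a σ_M-set `U ⊆ ↑Y`, M-continuity exhibits `x` as the supremum of some
`M₀ ∈ M` consisting of elements `≪_M x`. Inaccessibility of `U` puts some `m ∈ M₀` into `U`,
so `y ≤ m ≪_M x` for some `y ∈ Y`. -/

universe u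

/-- `e` is an eventual lower bound of the net `x`. -/
def EvLB {P : Type u} [PartialOrder P] {ι : Type u} [Preorder ι]
    (x : ι → P) (e : P) : Prop :=
  ∃ i₀ : ι, ∀ i : ι, i₀ ≤ i → e ≤ x i

/-- The net `x` M-converges to `y`: there is `M₀ ∈ M` with a supremum, all of whose
elements are eventual lower bounds of the net, whose supremum is above `y`. -/
def MConv {P : Type u} [PartialOrder P] (M : Set (Set P)) {ι : Type u} [Preorder ι]
    (x : ι → P) (y : P) : Prop :=
  ∃ M₀ ∈ M, (∀ m ∈ M₀, EvLB x m) ∧ ∃ s : P, IsLUB M₀ s ∧ y ≤ s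

/-- `U` is τ_M-open: every net that M-converges to a point of `U` is eventually in `U`.
(Nets are indexed by nonempty directed preordered sets.) -/
def TauMOpen {P : Type u} [PartialOrder P] (M : Set (Set P)) (U : Set P) : Prop :=
  ∀ (ι : Type u) [Preorder ι] [Nonempty ι],
    (∀ i j : ι, ∃ k : ι, i ≤ k ∧ j ≤ k) →
    ∀ x : ι → P, ∀ y ∈ U, MConv M x y →
    ∃ i₀ : ι, ∀ i : ι, i₀ ≤ i → x i ∈ U

/-- The M-below relation: `x ≪_M y`. -/
def MBelow {P : Type u} [PartialOrder P] (M : Set (Set P)) (x y : P) : Prop :=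
  ∀ M₀ ∈ M, ∀ s : P, IsLUB M₀ s → y ≤ s → ∃ m ∈ M₀, x ≤ m

/-- The collection σ_M of upper sets inaccessible by existing suprema of members of `M`. -/
def SigmaM {P : Type u} [PartialOrder P] (M : Set (Set P)) : Set (Set P) :=
  {U | IsUpperSet U ∧ ∀ M₀ ∈ M, ∀ s : P, IsLUB M₀ s → s ∈ U → (U ∩ M₀).Nonempty}

/-- M^∧ : the collection of lower closures of members of `M`. -/
def MHat {P : Type u} [PartialOrder P] (M : Set (Set P)) : Set (Set P) :=
  {A | ∃ M₀ ∈ M, A = {x | ∃ m ∈ M₀, x ≤ m}}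

/-- `P` is M-continuous. -/
def MCont {P : Type u} [PartialOrder P] (M : Set (Set P)) : Prop :=
  ∀ y : P, {x | MBelow M x y} ∈ MHat M ∧ IsLUB {x | MBelow M x y} y

theorem isLUB_lowerClosure {α : Type*} [Preorder α] {s : Set α} {a : α} :
    IsLUB (lowerClosure s : Set α) a ↔ IsLUB s a := by
  simp only [IsLUB, IsLeast, upperBounds_lowerClosure]

section MBelow

variable {P : Type u} [PartialOrder P] {M : Set (Set P)}

theorem MBelow.mono_left {x x' y : P} (hx : x' ≤ x) (h : MBelow M x y) : MBelow M x' y :=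
  fun M₀ hM₀ s hs hys ↦
    let ⟨m, hm, hxm⟩ := h M₀ hM₀ s hs hys
    ⟨m, hm, hx.trans hxm⟩

theorem MCont.exists_isLUB_subset_setOf_mBelow (h : MCont M) (y : P) :
    ∃ M₀ ∈ M, IsLUB M₀ y ∧ M₀ ⊆ {x | MBelow M x y} := by
  obtain ⟨⟨M₀, hM₀, hEq⟩, hLUB⟩ := h y
  change {x | MBelow M x y} = lowerClosure M₀ at hEq
  rw [hEq, isLUB_lowerClosure] at hLUB
  exact ⟨M₀, hM₀, hLUB, hEq ▸ subset_lowerClosure⟩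

end MBelow

theorem stmt4_general {P : Type u} [PartialOrder P] (M : Set (Set P))
    (h : MCont M) (Y : Set P) :
    ⋃₀ {U | U ∈ SigmaM M ∧ U ⊆ {x | ∃ y ∈ Y, y ≤ x}} ⊆ {x | ∃ y ∈ Y, MBelow M y x} := by
  rintro x ⟨U, ⟨⟨-, hU⟩, hUY⟩, hxU⟩
  obtain ⟨M₀, hM₀, hLUB, hM₀x⟩ := h.exists_isLUB_subset_setOf_mBelow x
  obtain ⟨m, hmU, hmM₀⟩ := hU M₀ hM₀ x hLUB hxU
  obtain ⟨y, hyY, hym⟩ := hUY hmU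
  exact ⟨y, hyY, (hM₀x hmM₀).mono_left hym⟩

/-- If `P` is M-continuous, then `int_{σ_M}(↑Y) ⊆ ↟_M Y` for every `Y ⊆ P`. -/
theorem stmt4 {P : Type u} [PartialOrder P] (M : Set (Set P))
    (hM : ∀ p : P, {p} ∈ M) (h : MCont M) (Y : Set P) :
    ⋃₀ {U | U ∈ SigmaM M ∧ U ⊆ {x | ∃ y ∈ Y, y ≤ x}} ⊆ {x | ∃ y ∈ Y, MBelow M y x} :=
  stmt4_general M h Y
end

section
/- Every I-continuous, sup-sober T0 space is I-stable. -/
universe u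

/-- The specialisation order of a topological space: `x ≤ y` iff `x ∈ closure {y}`. -/
def sle {X : Type u} [TopologicalSpace X] (x y : X) : Prop :=
  x ∈ closure ({y} : Set X)

/-- Upper bounds with respect to the specialisation order. -/
def sUB {X : Type u} [TopologicalSpace X] (A : Set X) : Set X :=
  {u | ∀ a ∈ A, sle a u}

/-- `s` is the least upper bound of `A` with respect to the specialisation order. -/
def sIsLUB {X : Type u} [TopologicalSpace X] (A : Set X) (s : X) : Prop :=
  s ∈ sUB A ∧ ∀ u ∈ sUB A, sle s u

/-- `x ≪_I y`: for every irreducible set `E` having a supremum above `y`,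
some element of `E` is above `x`. -/
def IBelow {X : Type u} [TopologicalSpace X] (x y : X) : Prop :=
  ∀ E : Set X, IsIrreducible E → ∀ s : X, sIsLUB E s → sle y s → ∃ e ∈ E, sle x e

/-- `X` is I-continuous: for every `y`, the set `↡_I y` is irreducible with
least upper bound `y`. -/
def IContinuous (X : Type u) [TopologicalSpace X] : Prop :=
  ∀ y : X, IsIrreducible {x | IBelow x y} ∧ sIsLUB {x | IBelow x y} y

/-- `X` is I-stable: `↟_I U` is open for every open `U`. -/
def IStable (X : Type u) [TopologicalSpace X] : Prop :=
  ∀ U : Set X, IsOpen U → IsOpen {x : X | ∃ a ∈ U, IBelow a x}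

/-- `X` is sup-sober: every closed irreducible set with a supremum is the closure
of that supremum. -/
def SupSober (X : Type u) [TopologicalSpace X] : Prop :=
  ∀ F : Set X, IsClosed F → IsIrreducible F → ∀ s : X, sIsLUB F s → F = closure ({s} : Set X)

/-- The collection σ_I: upper sets (w.r.t. specialisation) inaccessible by suprema of
irreducible sets. -/
def sigmaI (X : Type u) [TopologicalSpace X] : Set (Set X) :=
  {U | (∀ a ∈ U, ∀ b : X, sle a b → b ∈ U) ∧
       ∀ E : Set X, IsIrreducible E → ∀ s : X, sIsLUB E s → s ∈ U → (U ∩ E).Nonempty}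

/-- The irreducibly derived topology τ_SI: open sets inaccessible by suprema of
irreducible sets. -/
def tauSI (X : Type u) [TopologicalSpace X] : Set (Set X) :=
  {U | IsOpen U ∧ ∀ E : Set X, IsIrreducible E → ∀ s : X, sIsLUB E s → s ∈ U → (E ∩ U).Nonempty}

/-- The net `x` I-converges to `y`: there is an irreducible set `E` with a supremum above `y`,
all of whose elements are eventual lower bounds of the net. -/
def IConv {X : Type u} [TopologicalSpace X] {ι : Type u} [Preorder ι]
    (x : ι → X) (y : X) : Prop :=
  ∃ E : Set X, IsIrreducible E ∧
    (∀ e ∈ E, ∃ i₀ : ι, ∀ i : ι, i₀ ≤ i → sle e (x i)) ∧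
    ∃ s : X, sIsLUB E s ∧ sle y s

/-- `D` is directed with respect to the specialisation order. -/
def sDirectedOn {X : Type u} [TopologicalSpace X] (D : Set X) : Prop :=
  ∀ a ∈ D, ∀ b ∈ D, ∃ c ∈ D, sle a c ∧ sle b c

/-- Way-below in the specialisation poset, via nonempty directed sets. -/
def sWayBelow {X : Type u} [TopologicalSpace X] (x y : X) : Prop :=
  ∀ D : Set X, D.Nonempty → sDirectedOn D → ∀ s : X, sIsLUB D s → sle y s → ∃ d ∈ D, sle x d

/-- `X` is a DI space: the supremum of any irreducible set is also attained as the supremum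
of a nonempty directed subset of its lower closure. -/
def DISpace (X : Type u) [TopologicalSpace X] : Prop :=
  ∀ E : Set X, IsIrreducible E → ∀ s : X, sIsLUB E s →
    ∃ D : Set X, D.Nonempty ∧ sDirectedOn D ∧ (∀ d ∈ D, ∃ e ∈ E, sle d e) ∧ sIsLUB D s

/-- `U` is τ_I-open: every net that I-converges to a point of `U` is eventually in `U`. -/
def TauIOpen {X : Type u} [TopologicalSpace X] (U : Set X) : Prop :=
  ∀ (ι : Type u) [Preorder ι] [Nonempty ι],
    (∀ i j : ι, ∃ k : ι, i ≤ k ∧ j ≤ k) →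
    ∀ x : ι → X, ∀ y ∈ U, IConv x y →
    ∃ i₀ : ι, ∀ i : ι, i₀ ≤ i → x i ∈ U

/-! Sup-sobriety applied to the closure of `↡_I y`, whose supremum is `y`, gives
`closure (↡_I y) = closure {y}`; hence every open neighbourhood of `y` meets `↡_I y`.
Since open sets are upper sets in the specialisation order, `↟_I U = U` for every open `U`. -/

section Specialisation

variable {X : Type u} [TopologicalSpace X]

lemma sle_iff_specializes {x y : X} : sle x y ↔ y ⤳ x :=
  specializes_iff_mem_closure.symm

lemma sle_refl (x : X) : sle x x :=
  subset_closure rfl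

lemma sle_trans {x y z : X} (hxy : sle x y) (hyz : sle y z) : sle x z :=
  sle_iff_specializes.2 ((sle_iff_specializes.1 hyz).trans (sle_iff_specializes.1 hxy))

lemma IsOpen.mem_of_sle {U : Set X} (hU : IsOpen U) {a x : X} (ha : a ∈ U) (hax : sle a x) :
    x ∈ U :=
  (sle_iff_specializes.1 hax).mem_open hU ha

lemma sIsLUB_closure_singleton (x : X) : sIsLUB (closure ({x} : Set X)) x :=
  ⟨fun _ ha => ha, fun _ hu => hu x (subset_closure rfl)⟩

lemma sIsLUB.closure {A : Set X} {s : X} (h : sIsLUB A s) : sIsLUB (closure A) s :=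
  ⟨closure_minimal h.1 isClosed_closure, fun u hu => h.2 u fun a ha => hu a (subset_closure ha)⟩

lemma IBelow.sle {a x : X} (h : IBelow a x) : sle a x := by
  obtain ⟨e, he, hae⟩ := h (closure {x}) isIrreducible_singleton.closure x
    (sIsLUB_closure_singleton x) (sle_refl x)
  exact sle_trans hae he

lemma mem_closure_setOf_IBelow (hcont : IContinuous X) (hsober : SupSober X) (y : X) :
    y ∈ closure {x | IBelow x y} := by
  obtain ⟨hirr, hlub⟩ := hcont y
  rw [hsober _ isClosed_closure hirr.closure y hlub.closure]
  exact subset_closure rfl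

lemma setOf_exists_IBelow_eq_of_isOpen (hcont : IContinuous X) (hsober : SupSober X)
    {U : Set X} (hU : IsOpen U) : {x : X | ∃ a ∈ U, IBelow a x} = U := by
  ext x
  constructor
  · rintro ⟨a, haU, hax⟩
    exact hU.mem_of_sle haU hax.sle
  · intro hx
    exact mem_closure_iff.1 (mem_closure_setOf_IBelow hcont hsober x) U hU hx

end Specialisation

theorem stmt9_general {X : Type u} [TopologicalSpace X]
    (hcont : IContinuous X) (hsober : SupSober X) :
    IStable X := fun U hU => by
  rwa [setOf_exists_IBelow_eq_of_isOpen hcont hsober hU]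

/-- Every I-continuous sup-sober T0 space is I-stable. -/
theorem stmt9 {X : Type u} [TopologicalSpace X] [T0Space X]
    (hcont : IContinuous X) (hsober : SupSober X) :
    IStable X :=
  stmt9_general hcont hsober
end
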